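/- Let F be an algebraically closed field of characteristic 0. The common zero set in F² of the four polynomials a⁴+a²b, a³b+ab², ab³+a²b, b⁴+ab² is exactly {(0,0), (−1,−1), (α,α⁻¹), (α⁻¹,α)} where α satisfies α²−α+1=0. -/

import Mathlib

/-!
Off the axis `a = 0`, the first equation forces `b = -a²`, and the last one then reads
`a⁵ (a³ + 1) = 0`; conversely every pair `(a, -a²)` with `a³ = -1` solves all four.
Since `a · (-a²) = 1` for a cube root of `-1`, such a solution is `(a, a⁻¹)`, and
`a³ + 1 = (a + 1)(a - α)(a - α⁻¹)` because `α⁻¹ = 1 - α`.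
-/

theorem rank2Case4_equations_iff {R : Type*} [CommRing R] [NoZeroDivisors R] {a b : R} :
    (a ^ 4 + a ^ 2 * b = 0 ∧ a ^ 3 * b + a * b ^ 2 = 0 ∧ a * b ^ 3 + a ^ 2 * b = 0 ∧
        b ^ 4 + a * b ^ 2 = 0) ↔
      (a = 0 ∧ b = 0) ∨ (a ^ 3 = -1 ∧ b = -a ^ 2) := by
  constructor
  · rintro ⟨h1, -, -, h4⟩
    by_cases ha : a = 0
    · subst ha
      exact Or.inl ⟨rfl, pow_eq_zero_iff (n := 4) (by norm_num) |>.1 (by linear_combination h4)⟩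
    · have hb : b = -a ^ 2 := by
        have h : a ^ 2 * (a ^ 2 + b) = 0 := by linear_combination h1
        linear_combination (mul_eq_zero.1 h).resolve_left (pow_ne_zero 2 ha)
      subst hb
      have h : a ^ 5 * (a ^ 3 + 1) = 0 := by linear_combination h4
      exact Or.inr ⟨by linear_combination (mul_eq_zero.1 h).resolve_left (pow_ne_zero 5 ha), rfl⟩
  · rintro (⟨rfl, rfl⟩ | ⟨ha, rfl⟩)
    · norm_num
    · exact ⟨by ring, by ring, by linear_combination -a ^ 4 * ha, by linear_combination a ^ 5 * ha⟩

theorem neg_sq_eq_inv_of_pow_three_eq_neg_one {F : Type*} [DivisionRing F] {a : F}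
    (ha : a ^ 3 = -1) : -a ^ 2 = a⁻¹ :=
  (inv_eq_of_mul_eq_one_right (by rw [mul_neg, ← pow_succ', ha, neg_neg])).symm

theorem inv_eq_one_sub_of_sq_sub_add_one_eq_zero {F : Type*} [Field F] {α : F}
    (hα : α ^ 2 - α + 1 = 0) : α⁻¹ = 1 - α :=
  inv_eq_of_mul_eq_one_right (by linear_combination -hα)

theorem pow_three_eq_neg_one_iff {F : Type*} [Field F] {α : F} (hα : α ^ 2 - α + 1 = 0)
    {a : F} : a ^ 3 = -1 ↔ a = -1 ∨ a = α ∨ a = α⁻¹ := by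
  have hfactor : a ^ 3 + 1 = (a + 1) * ((a - α) * (a - α⁻¹)) := by
    rw [inv_eq_one_sub_of_sq_sub_add_one_eq_zero hα]
    linear_combination (a + 1) * hα
  rw [← add_eq_zero_iff_eq_neg, hfactor, mul_eq_zero, mul_eq_zero, add_eq_zero_iff_eq_neg,
    sub_eq_zero, sub_eq_zero]

theorem pow_three_eq_neg_one_and_eq_neg_sq_iff {F : Type*} [Field F] {α : F}
    (hα : α ^ 2 - α + 1 = 0) {a b : F} :
    a ^ 3 = -1 ∧ b = -a ^ 2 ↔ (a = -1 ∨ a = α ∨ a = α⁻¹) ∧ b = a⁻¹ := by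
  rw [← pow_three_eq_neg_one_iff hα]
  exact and_congr_right fun ha ↦ by rw [neg_sq_eq_inv_of_pow_three_eq_neg_one ha]

theorem rank2_case4_zero_set_general (F : Type*) [Field F]
    (α : F) (hα : α ^ 2 - α + 1 = 0) :
    {p : F × F |
      p.1 ^ 4 + p.1 ^ 2 * p.2 = 0 ∧
      p.1 ^ 3 * p.2 + p.1 * p.2 ^ 2 = 0 ∧
      p.1 * p.2 ^ 3 + p.1 ^ 2 * p.2 = 0 ∧
      p.2 ^ 4 + p.1 * p.2 ^ 2 = 0} =
    {(0, 0), (-1, -1), (α, α⁻¹), (α⁻¹, α)} := by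
  ext ⟨a, b⟩
  simp only [Set.mem_ofPred_eq, Set.mem_insert_iff, Set.mem_singleton_iff, Prod.mk.injEq,
    rank2Case4_equations_iff, pow_three_eq_neg_one_and_eq_neg_sq_iff hα]
  constructor
  · rintro (h | ⟨rfl | rfl | rfl, rfl⟩) <;> simp_all
  · rintro (h | ⟨rfl, rfl⟩ | ⟨rfl, rfl⟩ | ⟨rfl, rfl⟩) <;> simp_all

/-- Rank 2, case 4: the common zero set of the four polynomials is exactly four points. -/
theorem rank2_case4_zero_set (F : Type*) [Field F] [IsAlgClosed F] [CharZero F]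
    (α : F) (hα : α ^ 2 - α + 1 = 0) :
    {p : F × F |
      p.1 ^ 4 + p.1 ^ 2 * p.2 = 0 ∧
      p.1 ^ 3 * p.2 + p.1 * p.2 ^ 2 = 0 ∧
      p.1 * p.2 ^ 3 + p.1 ^ 2 * p.2 = 0 ∧
      p.2 ^ 4 + p.1 * p.2 ^ 2 = 0} =
    {(0, 0), (-1, -1), (α, α⁻¹), (α⁻¹, α)} :=
  rank2_case4_zero_set_general F α hα
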